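/- Let d ≥ 1, k ≥ 2, and let ν be a finite Borel measure on ℝ^d that is absolutely continuous with respect to Lebesgue measure, with Radon–Nikodym derivative f satisfying ∫ f(u)^k du < ∞. Then lim_{ε→0} ε^{−d(k−1)} ∫ ν(B(u, ε))^{k−1} dν(u) = ω_d^{k−1} ∫_{ℝ^d} f(u)^k du, where B(u, ε) is the open ball of radius ε about u and ω_d is the Lebesgue measure of the unit ball in ℝ^d. -/

import Mathlib

open MeasureTheory Matrix

noncomputable section

/-- `ℝ^d` with the Euclidean norm. -/
abbrev Pt (d : ℕ) := EuclideanSpace ℝ (Fin d)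

/-- `(ℝ^d)^k` with the Euclidean norm. -/
abbrev Cfg (d k : ℕ) := PiLp 2 fun _ : Fin k => Pt d

instance (d k : ℕ) : MeasurableSpace (Cfg d k) :=
  (inferInstance : MeasurableSpace (∀ _ : Fin k, Pt d)).comap WithLp.ofLp

/-- The diagonal action of an isometry `g` of `ℝ^d` on `(ℝ^d)^k`:
`g·(x₁,…,x_k) = (g x₁, …, g x_k)`. -/
def diagAct {d k : ℕ} (g : Pt d ≃ᵢ Pt d) (x : Cfg d k) : Cfg d k := WithLp.toLp 2 fun i => g (x i)

/-- `d(x,y) :=` the infimum over all isometries `g` of `ℝ^d` of `‖x − g·y‖`. -/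
def confDist {d k : ℕ} (x y : Cfg d k) : ℝ :=
  ⨅ g : Pt d ≃ᵢ Pt d, ‖x - diagAct g y‖

/-- The action of `ρ ∈ O(d)` on a vector of `ℝ^d`. -/
def rotAct {d : ℕ} (ρ : orthogonalGroup (Fin d) ℝ) (v : Pt d) : Pt d :=
  Matrix.toEuclideanCLM (𝕜 := ℝ) (ρ : Matrix (Fin d) (Fin d) ℝ) v

/-- The distance on `O(d)` induced by the operator norm on `d × d` matrices. -/
def opDist {d : ℕ} (ρ σ : orthogonalGroup (Fin d) ℝ) : ℝ :=
  ‖Matrix.toEuclideanCLM (𝕜 := ℝ) (ρ : Matrix (Fin d) (Fin d) ℝ)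
    - Matrix.toEuclideanCLM (𝕜 := ℝ) (σ : Matrix (Fin d) (Fin d) ℝ)‖

instance (d : ℕ) : MeasurableSpace (orthogonalGroup (Fin d) ℝ) := borel _
instance (d : ℕ) : BorelSpace (orthogonalGroup (Fin d) ℝ) := ⟨rfl⟩

instance (d : ℕ) : IsTopologicalGroup (orthogonalGroup (Fin d) ℝ) where
  continuous_inv := continuous_induced_rng.mpr <|
    (continuous_star.comp continuous_subtype_val : _)

theorem isCompact_orthogonalGroup (d : ℕ) :
    IsCompact (orthogonalGroup (Fin d) ℝ : Set (Matrix (Fin d) (Fin d) ℝ)) := by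
  have hsub : (orthogonalGroup (Fin d) ℝ : Set (Matrix (Fin d) (Fin d) ℝ)) ⊆
      Set.pi Set.univ fun _ : Fin d => Set.pi Set.univ fun _ : Fin d => Set.Icc (-1 : ℝ) 1 := by
    intro U hU i _ j _
    have := entry_norm_bound_of_unitary hU i j
    rw [Real.norm_eq_abs] at this
    constructor <;> linarith [abs_le.mp this]
  have hclosed : IsClosed (orthogonalGroup (Fin d) ℝ : Set (Matrix (Fin d) (Fin d) ℝ)) := by
    have heq : (orthogonalGroup (Fin d) ℝ : Set (Matrix (Fin d) (Fin d) ℝ)) =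
        {U | star U * U = 1} ∩ {U | U * star U = 1} := by
      ext U
      exact Unitary.mem_iff
    rw [heq]
    exact (isClosed_eq ((continuous_star.comp continuous_id).matrix_mul continuous_id)
        continuous_const).inter
      (isClosed_eq (continuous_id.matrix_mul (continuous_star.comp continuous_id))
        continuous_const)
  have hcpt : IsCompact (Set.pi Set.univ fun _ : Fin d => Set.pi Set.univ
      fun _ : Fin d => Set.Icc (-1 : ℝ) 1) :=
    isCompact_univ_pi fun _ => isCompact_univ_pi fun _ => isCompact_Icc
  exact hcpt.of_isClosed_subset hclosed hsub

instance (d : ℕ) : CompactSpace (orthogonalGroup (Fin d) ℝ) :=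
  isCompact_iff_compactSpace.mp (isCompact_orthogonalGroup d)

set_option synthInstance.maxHeartbeats 1000000 in
instance (d : ℕ) : LocallyCompactSpace (orthogonalGroup (Fin d) ℝ) := inferInstance

/-- The Haar measure on `O(d)`. -/
def haarOd (d : ℕ) : Measure (orthogonalGroup (Fin d) ℝ) := Measure.haar

/-!
Write `f = dν/dλ` and `A_ε(u) = ν(B(u,ε)) / λ(B(u,ε))`, the average of `f` over `B(u,ε)`. Since
`λ(B(u,ε)) = ε^d ω_d`, the quantity in the theorem is `ω_d^{k-1} ∫ A_ε^{k-1} dν`. By the Lebesgue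
differentiation theorem `A_ε → f` ν-almost everywhere, so Fatou's lemma bounds the `liminf` from
below by `∫ f^{k-1} dν = ∫ f^k dλ`. Conversely, Jensen's inequality on each ball and Tonelli give
`∫ A_ε^k dλ ≤ ∫ f^k dλ`, and then Hölder's inequality gives
`∫ A_ε^{k-1} dν = ∫ f A_ε^{k-1} dλ ≤ ∫ f^k dλ` for every `ε > 0`.
-/

open Metric Filter Topology ENNReal Module

namespace ENNReal

variable {α : Type*} [MeasurableSpace α] {μ : Measure α}

theorem lintegral_mul_pow_pow_succ_le {f g : α → ℝ≥0∞} (hf : AEMeasurable f μ)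
    (hg : AEMeasurable g μ) (n : ℕ) :
    (∫⁻ x, f x * g x ^ n ∂μ) ^ (n + 1) ≤
      (∫⁻ x, f x ^ (n + 1) ∂μ) * (∫⁻ x, g x ^ (n + 1) ∂μ) ^ n := by
  have hroot : ∀ (x : ℝ≥0∞) (m : ℕ), (x ^ (n + 1)) ^ ((m : ℝ) / (n + 1)) = x ^ m := by
    intro x m
    rw [← ENNReal.rpow_natCast, ← ENNReal.rpow_mul, ← ENNReal.rpow_natCast x m]
    congr 1
    push_cast
    field_simp
  have H := ENNReal.lintegral_mul_norm_pow_le (hf.pow_const (n + 1)) (hg.pow_const (n + 1))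
    (p := ((1 : ℕ) : ℝ) / (n + 1)) (q := n / (n + 1)) (by positivity) (by positivity)
    (by field_simp; ring)
  simp only [hroot] at H
  simp only [pow_one, Nat.cast_one] at H
  calc (∫⁻ x, f x * g x ^ n ∂μ) ^ (n + 1)
      ≤ ((∫⁻ x, f x ^ (n + 1) ∂μ) ^ ((1 : ℝ) / (n + 1)) *
          (∫⁻ x, g x ^ (n + 1) ∂μ) ^ ((n : ℝ) / (n + 1))) ^ (n + 1) := by
        gcongr
    _ = _ := by
        rw [mul_pow, ← ENNReal.rpow_natCast, ← ENNReal.rpow_mul, ← ENNReal.rpow_natCast _ (n + 1),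
          ← ENNReal.rpow_mul, ← ENNReal.rpow_natCast _ n]
        congr 2 <;> push_cast <;> field_simp
        exact ENNReal.rpow_one _

theorem lintegral_mul_pow_le_of_lintegral_pow_le {f g : α → ℝ≥0∞} (hf : AEMeasurable f μ)
    (hg : AEMeasurable g μ) {n : ℕ} (hfg : ∫⁻ x, g x ^ (n + 1) ∂μ ≤ ∫⁻ x, f x ^ (n + 1) ∂μ) :
    ∫⁻ x, f x * g x ^ n ∂μ ≤ ∫⁻ x, f x ^ (n + 1) ∂μ := by
  rw [← ENNReal.pow_le_pow_left_iff n.succ_ne_zero]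
  calc (∫⁻ x, f x * g x ^ n ∂μ) ^ (n + 1)
      ≤ (∫⁻ x, f x ^ (n + 1) ∂μ) * (∫⁻ x, g x ^ (n + 1) ∂μ) ^ n :=
        lintegral_mul_pow_pow_succ_le hf hg n
    _ ≤ (∫⁻ x, f x ^ (n + 1) ∂μ) * (∫⁻ x, f x ^ (n + 1) ∂μ) ^ n := by gcongr
    _ = (∫⁻ x, f x ^ (n + 1) ∂μ) ^ (n + 1) := (pow_succ' _ n).symm

end ENNReal

theorem laverage_pow_le {α : Type*} [MeasurableSpace α] {μ : Measure α} {f : α → ℝ≥0∞}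
    (hf : AEMeasurable f μ) (n : ℕ) :
    (⨍⁻ x, f x ∂μ) ^ (n + 1) ≤ ⨍⁻ x, f x ^ (n + 1) ∂μ := by
  simp only [laverage_eq']
  have hmass : ∫⁻ _, 1 ^ (n + 1) ∂(μ Set.univ)⁻¹ • μ ≤ 1 := by simp
  simpa using (ENNReal.lintegral_mul_pow_pow_succ_le (hf.smul_measure _) aemeasurable_const n
    (g := fun _ => 1)).trans (mul_le_of_le_one_right' (pow_le_one₀ bot_le hmass))

theorem measurable_measure_ball {X : Type*} [PseudoMetricSpace X] [SecondCountableTopology X]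
    [MeasurableSpace X] [OpensMeasurableSpace X] (ν : Measure X) [SFinite ν] (r : ℝ) :
    Measurable fun u => ν (ball u r) :=
  measurable_measure_prodMk_left (s := {p : X × X | dist p.2 p.1 < r})
    (isOpen_lt (continuous_snd.dist continuous_fst) continuous_const).measurableSet

section Ball

variable {E : Type*} [NormedAddCommGroup E] [NormedSpace ℝ E] [FiniteDimensional ℝ E]
  [MeasurableSpace E] [BorelSpace E] (μ : Measure E) [μ.IsAddHaarMeasure]

theorem lintegral_setLIntegral_ball {h : E → ℝ≥0∞} (hh : Measurable h) (r : ℝ) :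
    ∫⁻ u, ∫⁻ v in ball u r, h v ∂μ ∂μ = μ (ball 0 r) * ∫⁻ v, h v ∂μ := by
  let S := {p : E × E | dist p.2 p.1 < r}
  have hS : MeasurableSet S :=
    (isOpen_lt (continuous_snd.dist continuous_fst) continuous_const).measurableSet
  have hSh : Measurable (S.indicator fun p => h p.2) := (hh.comp measurable_snd).indicator hS
  calc ∫⁻ u, ∫⁻ v in ball u r, h v ∂μ ∂μ
      = ∫⁻ u, ∫⁻ v, S.indicator (fun p => h p.2) (u, v) ∂μ ∂μ := by
        simp_rw [← lintegral_indicator measurableSet_ball]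
        rfl
    _ = ∫⁻ v, ∫⁻ u, S.indicator (fun p => h p.2) (u, v) ∂μ ∂μ :=
        lintegral_lintegral_swap hSh.aemeasurable
    _ = ∫⁻ v, μ (ball 0 r) * h v ∂μ := by
        refine lintegral_congr fun v => ?_
        have : (fun u => S.indicator (fun p => h p.2) (u, v)) =
            (ball v r).indicator fun _ => h v := by
          ext u
          simp only [S, Set.indicator, Set.mem_ofPred_eq, mem_ball, dist_comm]
        rw [this, lintegral_indicator_const measurableSet_ball, Measure.addHaar_ball_center,
          mul_comm]
    _ = μ (ball 0 r) * ∫⁻ v, h v ∂μ := lintegral_const_mul _ hh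

theorem lintegral_setLAverage_ball {h : E → ℝ≥0∞} (hh : Measurable h) {r : ℝ} (hr : 0 < r) :
    ∫⁻ u, ⨍⁻ v in ball u r, h v ∂μ ∂μ = ∫⁻ v, h v ∂μ := by
  have h0 : μ (ball 0 r) ≠ 0 := (measure_ball_pos μ 0 hr).ne'
  have htop : μ (ball 0 r) ≠ ∞ := measure_ball_lt_top.ne
  simp_rw [setLAverage_eq, Measure.addHaar_ball_center μ _ r, ENNReal.div_eq_inv_mul]
  rw [lintegral_const_mul' _ _ (ENNReal.inv_ne_top.mpr h0), lintegral_setLIntegral_ball μ hh,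
    ← mul_assoc, ENNReal.inv_mul_cancel h0 htop, one_mul]

end Ball

theorem tendsto_lintegral_of_ae_tendsto_of_le {α ι : Type*} [MeasurableSpace α] {μ : Measure α}
    {l : Filter ι} [l.IsCountablyGenerated] {F : ι → α → ℝ≥0∞} {G : α → ℝ≥0∞}
    (hF : ∀ i, AEMeasurable (F i) μ) (hlim : ∀ᵐ x ∂μ, Tendsto (fun i => F i x) l (𝓝 (G x)))
    (hle : ∀ᶠ i in l, ∫⁻ x, F i x ∂μ ≤ ∫⁻ x, G x ∂μ) :
    Tendsto (fun i => ∫⁻ x, F i x ∂μ) l (𝓝 (∫⁻ x, G x ∂μ)) := by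
  rcases l.eq_or_neBot with rfl | _
  · exact tendsto_bot
  refine tendsto_of_le_liminf_of_limsup_le ?_ (limsup_le_of_le (by isBoundedDefault) hle)
  calc ∫⁻ x, G x ∂μ = ∫⁻ x, liminf (fun i => F i x) l ∂μ :=
        lintegral_congr_ae (hlim.mono fun x hx => hx.liminf_eq.symm)
    _ ≤ liminf (fun i => ∫⁻ x, F i x ∂μ) l := lintegral_liminf_le' hF

section Density

variable {E : Type*} [NormedAddCommGroup E] [NormedSpace ℝ E] [FiniteDimensional ℝ E]
  [MeasurableSpace E] [BorelSpace E] {μ : Measure E} [μ.IsAddHaarMeasure] {ν : Measure E}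

theorem measure_ball_eq_closedBall_of_absolutelyContinuous (hac : ν ≪ μ) (x : E) {r : ℝ}
    (hr : r ≠ 0) : ν (ball x r) = ν (closedBall x r) :=
  measure_eq_measure_of_null_sdiff ball_subset_closedBall <| by
    rw [closedBall_sdiff_ball]
    exact hac (Measure.addHaar_sphere_of_ne_zero μ x hr)

theorem ae_tendsto_measure_ball_div [IsLocallyFiniteMeasure ν] (hac : ν ≪ μ) :
    ∀ᵐ u ∂ν, Tendsto (fun r => ν (ball u r) / μ (ball u r)) (𝓝[>] 0) (𝓝 (ν.rnDeriv μ u)) := by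
  filter_upwards [hac.ae_le (Besicovitch.ae_tendsto_rnDeriv ν μ)] with u hu
  refine hu.congr' ?_
  filter_upwards [self_mem_nhdsWithin] with r (hr : 0 < r)
  rw [measure_ball_eq_closedBall_of_absolutelyContinuous hac u hr.ne',
    measure_ball_eq_closedBall_of_absolutelyContinuous Measure.AbsolutelyContinuous.rfl u hr.ne']

theorem lintegral_measure_ball_div_pow_le [IsFiniteMeasure ν] (hac : ν ≪ μ) (n : ℕ) {r : ℝ}
    (hr : 0 < r) :
    ∫⁻ u, (ν (ball u r) / μ (ball u r)) ^ n ∂ν ≤ ∫⁻ u, ν.rnDeriv μ u ^ (n + 1) ∂μ := by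
  have hf : Measurable (ν.rnDeriv μ) := Measure.measurable_rnDeriv ν μ
  have hg : Measurable fun u => ν (ball u r) / μ (ball u r) :=
    (measurable_measure_ball ν r).div (measurable_measure_ball μ r)
  rw [← lintegral_rnDeriv_mul hac (hg.pow_const n).aemeasurable]
  refine ENNReal.lintegral_mul_pow_le_of_lintegral_pow_le hf.aemeasurable hg.aemeasurable ?_
  calc ∫⁻ u, (ν (ball u r) / μ (ball u r)) ^ (n + 1) ∂μ
      ≤ ∫⁻ u, ⨍⁻ v in ball u r, ν.rnDeriv μ v ^ (n + 1) ∂μ ∂μ := by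
        refine lintegral_mono fun u => ?_
        rw [← Measure.setLIntegral_rnDeriv hac, ← setLAverage_eq]
        exact laverage_pow_le hf.aemeasurable n
    _ = ∫⁻ u, ν.rnDeriv μ u ^ (n + 1) ∂μ := lintegral_setLAverage_ball μ (hf.pow_const _) hr

theorem tendsto_lintegral_measure_ball_div_pow [IsFiniteMeasure ν] (hac : ν ≪ μ) (n : ℕ) :
    Tendsto (fun r => ∫⁻ u, (ν (ball u r) / μ (ball u r)) ^ n ∂ν) (𝓝[>] 0)
      (𝓝 (∫⁻ u, ν.rnDeriv μ u ^ (n + 1) ∂μ)) := by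
  have hf : Measurable (ν.rnDeriv μ) := Measure.measurable_rnDeriv ν μ
  have hdensity : ∫⁻ u, ν.rnDeriv μ u ^ (n + 1) ∂μ = ∫⁻ u, ν.rnDeriv μ u ^ n ∂ν := by
    simp_rw [← lintegral_rnDeriv_mul hac (hf.pow_const n).aemeasurable, pow_succ']
  rw [hdensity]
  refine tendsto_lintegral_of_ae_tendsto_of_le (fun r => ?_) ?_ ?_
  · exact ((measurable_measure_ball ν r).div (measurable_measure_ball μ r)).pow_const n
      |>.aemeasurable
  · filter_upwards [ae_tendsto_measure_ball_div hac] with u hu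
    exact ((ENNReal.continuous_pow n).tendsto _).comp hu
  · filter_upwards [self_mem_nhdsWithin] with r (hr : 0 < r)
    exact hdensity ▸ lintegral_measure_ball_div_pow_le hac n hr

end Density

theorem ofReal_zpow_neg_finrank_mul_pow {E : Type*} [NormedAddCommGroup E] [NormedSpace ℝ E]
    [FiniteDimensional ℝ E] [MeasurableSpace E] [BorelSpace E] (μ : Measure E)
    [μ.IsAddHaarMeasure] {r : ℝ} (hr : 0 < r) (x : E) (n : ℕ) (a : ℝ≥0∞) :
    ENNReal.ofReal (r ^ (-(finrank ℝ E * n : ℤ))) * a ^ n =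
      μ (ball 0 1) ^ n * (a / μ (ball x r)) ^ n := by
  set R := ENNReal.ofReal (r ^ finrank ℝ E)
  have hR : ENNReal.ofReal (r ^ (-(finrank ℝ E * n : ℤ))) = (R ^ n)⁻¹ := by
    rw [← ENNReal.ofReal_pow (by positivity), ← pow_mul,
      ← ENNReal.ofReal_inv_of_pos (by positivity), _root_.zpow_neg, ← zpow_natCast]
    push_cast
    rfl
  rw [hR, Measure.addHaar_ball_of_pos μ x hr, ← mul_pow, mul_div_assoc', mul_comm _ a,
    ENNReal.mul_div_mul_right _ _ (measure_ball_pos μ 0 one_pos).ne' measure_ball_lt_top.ne,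
    ENNReal.div_eq_inv_mul, mul_pow, ENNReal.inv_pow]

theorem stmt10_general (d k : ℕ) (hk : 2 ≤ k) (ν : Measure (Pt d))
    (hfin : IsFiniteMeasure ν) (hac : ν ≪ volume) :
    Filter.Tendsto
      (fun ε : ℝ => ENNReal.ofReal (ε ^ (-(d * (k - 1) : ℤ))) *
        ∫⁻ u : Pt d, ν (Metric.ball u ε) ^ (k - 1) ∂ν)
      (nhdsWithin 0 (Set.Ioi 0))
      (nhds ((volume (Metric.ball (0 : Pt d) 1)) ^ (k - 1) *
        ∫⁻ u : Pt d, ν.rnDeriv volume u ^ k ∂volume)) := by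
  obtain ⟨n, rfl⟩ : ∃ n, k = n + 1 := ⟨k - 1, by omega⟩
  have hexp : (d : ℤ) * ((n + 1 : ℕ) - 1) = finrank ℝ (Pt d) * n := by simp
  simp only [hexp, Nat.add_sub_cancel]
  have hω : volume (ball (0 : Pt d) 1) ^ n ≠ ∞ := pow_ne_top measure_ball_lt_top.ne
  refine (ENNReal.Tendsto.const_mul (tendsto_lintegral_measure_ball_div_pow hac n)
    (Or.inr hω)).congr' ?_
  filter_upwards [self_mem_nhdsWithin] with ε (hε : 0 < ε)
  rw [← lintegral_const_mul' _ _ hω, ← lintegral_const_mul' _ _ ofReal_ne_top]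
  exact lintegral_congr fun u => (ofReal_zpow_neg_finrank_mul_pow volume hε u n _).symm

/-- If `ν` is a finite Borel measure on `ℝ^d`, absolutely continuous
with density `f` satisfying `∫ f^k < ∞`, then
`ε^{−d(k−1)} ∫ ν(B(u,ε))^{k−1} dν(u) → ω_d^{k−1} ∫ f(u)^k du` as `ε → 0⁺`, where `ω_d`
is the Lebesgue measure of the unit ball. -/
theorem stmt10 (d k : ℕ) (hd : 1 ≤ d) (hk : 2 ≤ k) (ν : Measure (Pt d))
    (hfin : IsFiniteMeasure ν) (hac : ν ≪ volume)
    (hint : (∫⁻ u : Pt d, ν.rnDeriv volume u ^ k ∂volume) < ⊤) :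
    Filter.Tendsto
      (fun ε : ℝ => ENNReal.ofReal (ε ^ (-(d * (k - 1) : ℤ))) *
        ∫⁻ u : Pt d, ν (Metric.ball u ε) ^ (k - 1) ∂ν)
      (nhdsWithin 0 (Set.Ioi 0))
      (nhds ((volume (Metric.ball (0 : Pt d) 1)) ^ (k - 1) *
        ∫⁻ u : Pt d, ν.rnDeriv volume u ^ k ∂volume)) :=
  stmt10_general d k hk ν hfin hac
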